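/- arXiv:2005.04460 — 2 statements merged into one kernel-verified Lean document; each statement's English description precedes it below -/
import Mathlib

section
/- Let G be a finite subgroup of GL(V) with dim V^G = 2 and let f be a nonzero homogeneous G-invariant polynomial function on V that vanishes identically on V^G. Then the line ℙ(V^G) is contained in the singular locus of Z(f): for every nonzero v ∈ V^G, all partial derivatives of f vanish at v. -/
noncomputable section
open MvPolynomial Matrix

/-- The subspace of vectors fixed by every element of a set of invertible matrices. -/
def fixedSpace {n : ℕ} (S : Set (GL (Fin n) ℂ)) : Submodule ℂ (Fin n → ℂ) where
  carrier := {v | ∀ g ∈ S, (g : Matrix (Fin n) (Fin n) ℂ).mulVec v = v}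
  add_mem' := by
    intro a b ha hb g hg
    rw [Matrix.mulVec_add, ha g hg, hb g hg]
  zero_mem' := by
    intro g hg
    simp
  smul_mem' := by
    intro c a ha g hg
    rw [Matrix.mulVec_smul, ha g hg]

/-! At a `G`-fixed point `v` the differential `df_v` is a `G`-invariant linear form, since `G`
fixes `v` and `f` is invariant, and it vanishes on `V^G`, since `f` vanishes on the lines
`v + t • u` with `u ∈ V^G`. Averaging over the finite group `G` projects `V` onto `V^G` and
leaves an invariant linear form unchanged, so such a form is zero as soon as it vanishes on
`V^G`. -/

namespace MvPolynomial

section CommSemiring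

variable {R σ : Type*} [CommSemiring R]

theorem derivative_aeval [Fintype σ] (γ : σ → Polynomial R) (p : MvPolynomial σ R) :
    Polynomial.derivative (aeval γ p) =
      ∑ j, aeval γ (pderiv j p) * Polynomial.derivative (γ j) := by
  classical
  induction p using MvPolynomial.induction_on with
  | C a => simp
  | add p q hp hq => simp only [map_add, hp, hq, add_mul, Finset.sum_add_distrib]
  | mul_X p i hp =>
    simp only [map_mul, aeval_X, Polynomial.derivative_mul, hp, Derivation.leibniz, pderiv_X,
      smul_eq_mul, map_add, add_mul, Finset.sum_add_distrib, Finset.sum_mul]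
    simp [Pi.single_apply, add_comm]
    exact congrArg _ (Finset.sum_congr rfl fun _ _ => by ring)

def restrictLine (p : MvPolynomial σ R) (v u : σ → R) : Polynomial R :=
  aeval (fun i => Polynomial.C (v i) + Polynomial.C (u i) * Polynomial.X) p

theorem eval_restrictLine (p : MvPolynomial σ R) (v u : σ → R) (t : R) :
    (p.restrictLine v u).eval t = eval (v + t • u) p := by
  induction p using MvPolynomial.induction_on with
  | C a => simp [restrictLine]
  | add p q hp hq => simp_all [restrictLine]
  | mul_X p i hp => simp_all [restrictLine]; ring

theorem coeff_one_restrictLine [Fintype σ] (p : MvPolynomial σ R) (v u : σ → R) :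
    (p.restrictLine v u).coeff 1 = (fun j => eval v (pderiv j p)) ⬝ᵥ u := by
  have h := Polynomial.taylor_coeff_one (r := 0) (f := p.restrictLine v u)
  rw [Polynomial.taylor_zero] at h
  rw [h, restrictLine, derivative_aeval, Polynomial.eval_finsetSum]
  refine Finset.sum_congr rfl fun j _ => ?_
  rw [← restrictLine]
  simp [eval_restrictLine]

end CommSemiring

section Infinite

variable {R σ : Type*} [CommRing R] [IsDomain R] [Infinite R] [Fintype σ]

theorem dotProduct_pderiv_eq_of_forall_eval_eq {p : MvPolynomial σ R} {v u w : σ → R}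
    (h : ∀ t : R, eval (v + t • u) p = eval (v + t • w) p) :
    (fun j => eval v (pderiv j p)) ⬝ᵥ u = (fun j => eval v (pderiv j p)) ⬝ᵥ w := by
  have hline : p.restrictLine v u = p.restrictLine v w :=
    Polynomial.funext fun t => by simp only [eval_restrictLine, h]
  rw [← coeff_one_restrictLine, ← coeff_one_restrictLine, hline]

end Infinite

end MvPolynomial

namespace Representation

variable {k G V W : Type*} [CommRing k] [Group G] [Fintype G] [Invertible (Fintype.card G : k)]
  [AddCommGroup V] [Module k V] [AddCommGroup W] [Module k W] (ρ : Representation k G V)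

theorem comp_averageMap_of_forall_comp_eq {ℓ : V →ₗ[k] W} (hℓ : ∀ g, ℓ ∘ₗ ρ g = ℓ) :
    ℓ ∘ₗ ρ.averageMap = ℓ := by
  ext v
  have hℓv (g : G) : ℓ (ρ g v) = ℓ v := LinearMap.congr_fun (hℓ g) v
  simp [GroupAlgebra.average, map_sum, hℓv, Finset.card_univ, ← Nat.cast_smul_eq_nsmul k,
    smul_smul]

theorem eq_zero_of_forall_comp_eq_of_invariants_le_ker {ℓ : V →ₗ[k] W}
    (hℓ : ∀ g, ℓ ∘ₗ ρ g = ℓ) (hker : ρ.invariants ≤ LinearMap.ker ℓ) : ℓ = 0 := by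
  ext v
  rw [← comp_averageMap_of_forall_comp_eq ρ hℓ]
  exact hker (ρ.averageMap_invariant v)

end Representation

def matrixRepresentation {n R : Type*} [CommRing R] [Fintype n] [DecidableEq n]
    (G : Subgroup (GL n R)) : Representation R G (n → R) :=
  (Matrix.toLinAlgEquiv' : Matrix n n R ≃ₐ[R] Module.End R (n → R)).toMonoidHom.comp
    ((Units.coeHom _).comp G.subtype)

theorem matrixRepresentation_apply {n R : Type*} [CommRing R] [Fintype n] [DecidableEq n]
    (G : Subgroup (GL n R)) (g : G) (w : n → R) :
    matrixRepresentation G g w = ((g : GL n R) : Matrix n n R) *ᵥ w := rfl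

theorem invariants_matrixRepresentation {n : ℕ} (G : Subgroup (GL (Fin n) ℂ)) :
    (matrixRepresentation G).invariants = fixedSpace (G : Set (GL (Fin n) ℂ)) := by
  ext v
  simp [Representation.mem_invariants, fixedSpace, matrixRepresentation_apply]

theorem stmt_6_general {n : ℕ} (G : Subgroup (GL (Fin n) ℂ)) (hG : Finite G)
    (f : MvPolynomial (Fin n) ℂ)
    (hinv : ∀ g ∈ G, ∀ w : Fin n → ℂ,
      MvPolynomial.eval ((g : Matrix (Fin n) (Fin n) ℂ).mulVec w) f = MvPolynomial.eval w f)
    (hvan : ∀ w ∈ fixedSpace (G : Set (GL (Fin n) ℂ)), MvPolynomial.eval w f = 0) :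
    ∀ v ∈ fixedSpace (G : Set (GL (Fin n) ℂ)), v ≠ 0 →
      ∀ i, MvPolynomial.eval v (pderiv i f) = 0 := by
  intro v hv _ i
  have := Fintype.ofFinite G
  have hcard : (Fintype.card G : ℂ) ≠ 0 := Nat.cast_ne_zero.2 Fintype.card_ne_zero
  have := invertibleOfNonzero hcard
  have hdf : dotProductBilin ℂ ℂ (fun j => eval v (pderiv j f)) = 0 := by
    refine (matrixRepresentation G).eq_zero_of_forall_comp_eq_of_invariants_le_ker
      (fun g => LinearMap.ext fun u => ?_) fun u hu => ?_
    · rw [LinearMap.comp_apply, dotProductBilin_apply_apply, dotProductBilin_apply_apply]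
      refine dotProduct_pderiv_eq_of_forall_eval_eq fun t => ?_
      rw [matrixRepresentation_apply, ← hinv g g.2 (v + t • u), mulVec_add, mulVec_smul, hv g g.2]
    · rw [invariants_matrixRepresentation] at hu
      rw [LinearMap.mem_ker, dotProductBilin_apply_apply]
      refine (dotProduct_pderiv_eq_of_forall_eval_eq (w := 0) fun t => ?_).trans (dotProduct_zero _)
      rw [smul_zero, add_zero, hvan v hv]
      exact hvan _ (add_mem hv (Submodule.smul_mem _ t hu))
  simpa using LinearMap.congr_fun hdf (Pi.single i 1)

theorem stmt_6 {n e : ℕ} (G : Subgroup (GL (Fin n) ℂ)) (hG : Finite G)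
    (hdim : Module.finrank ℂ (fixedSpace (G : Set (GL (Fin n) ℂ))) = 2)
    (f : MvPolynomial (Fin n) ℂ) (hf0 : f ≠ 0) (hhom : f.IsHomogeneous e)
    (hinv : ∀ g ∈ G, ∀ w : Fin n → ℂ,
      MvPolynomial.eval ((g : Matrix (Fin n) (Fin n) ℂ).mulVec w) f = MvPolynomial.eval w f)
    (hvan : ∀ w ∈ fixedSpace (G : Set (GL (Fin n) ℂ)), MvPolynomial.eval w f = 0) :
    ∀ v ∈ fixedSpace (G : Set (GL (Fin n) ℂ)), v ≠ 0 →
      ∀ i, MvPolynomial.eval v (pderiv i f) = 0 :=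
  stmt_6_general G hG f hinv hvan
end
end

section
/- Let W be a finite subgroup of GLₙ(ℂ) and let f₁, …, fₙ ∈ ℂ[x₁,…,xₙ] be algebraically independent homogeneous polynomials, of degrees d₁, …, dₙ, that generate the algebra ℂ[x₁,…,xₙ]^W of W-invariant polynomials. Then the map v ↦ (f₁(v),…,fₙ(v)) sends ℂⁿ∖{0} into ℂⁿ∖{0} and induces a bijection from ℙ(ℂⁿ)/W onto the weighted projective space ℙ(d₁,…,dₙ). Concretely: (i) for every v ∈ ℂⁿ∖{0}, not all fᵢ(v) vanish; (ii) for u, v ∈ ℂⁿ∖{0}, there exists t ∈ ℂ* with fᵢ(u) = t^{dᵢ}·fᵢ(v) for all i, if and only if u = s·(g·v) for some g ∈ W and s ∈ ℂ*; (iii) for every x ∈ ℂⁿ∖{0} there exist v ∈ ℂⁿ∖{0} and t ∈ ℂ* with xᵢ = t^{dᵢ}·fᵢ(v) for all i. -/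
/-!
Invariants of a finite group separate its orbits: if `u ∉ W • w`, a polynomial vanishing at `w`
and equal to `1` on the orbit of `u` becomes, after multiplying its `W`-translates, an invariant
taking the value `1` at `u` and `0` at `w`. Since the `fᵢ` generate the invariants,
`f(u) = f(w)` forces `u ∈ W • w`. Together with `f(t • v) = (t ^ dᵢ * fᵢ(v))ᵢ` and `f(0) = 0`
(algebraically independent homogeneous polynomials have positive degree) this gives (i) and (ii).

For (iii): every polynomial `p` is a root of the monic `∏_g (T - p ∘ g)`, whose coefficients are
invariant, so `ℂ[x]` is integral over `ℂ[f₁, …, fₙ]`. The latter is a polynomial ring, so each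
`x ∈ ℂⁿ` defines a character `fᵢ ↦ xᵢ` of it; by lying over and the Nullstellensatz this character
is evaluation at some `v`, i.e. `f(v) = x`.
-/

noncomputable section
open MvPolynomial Matrix

namespace MvPolynomial

variable {K σ : Type*} [Field K]

theorem IsHomogeneous.eval_smul {p : MvPolynomial σ K} {m : ℕ} [Fintype σ]
    (hp : p.IsHomogeneous m) (s : K) (v : σ → K) : eval (s • v) p = s ^ m * eval v p := by
  rw [eval_eq', eval_eq', Finset.mul_sum]
  refine Finset.sum_congr rfl fun e he => ?_
  have hdeg : ∑ i, e i = m := by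
    simpa [Finsupp.weight_apply, Finsupp.sum_fintype] using hp (mem_support_iff.mp he)
  simp only [Pi.smul_apply, smul_eq_mul, mul_pow, Finset.prod_mul_distrib,
    Finset.prod_pow_eq_pow_sum, hdeg]
  ring

theorem IsHomogeneous.eval_zero_of_ne_zero {p : MvPolynomial σ K} {m : ℕ} [Fintype σ]
    (hp : p.IsHomogeneous m) (hm : m ≠ 0) : eval 0 p = 0 := by
  simpa [zero_pow hm] using hp.eval_smul 0 0

theorem _root_.AlgebraicIndependent.ne_zero_of_isHomogeneous {ι : Type*}
    {f : ι → MvPolynomial σ K} (hf : AlgebraicIndependent K f) {i : ι} {m : ℕ}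
    (hi : (f i).IsHomogeneous m) : m ≠ 0 := by
  rintro rfl
  apply hf.transcendental i
  rw [← homogeneousComponent_eq_self hi, homogeneousComponent_zero]
  exact isAlgebraic_algebraMap _

theorem eval_eq_of_mem_adjoin {ι : Type*} {f : ι → MvPolynomial σ K} {p : MvPolynomial σ K}
    (hp : p ∈ Algebra.adjoin K (Set.range f)) {u w : σ → K}
    (h : ∀ i, eval u (f i) = eval w (f i)) : eval u p = eval w p :=
  Algebra.adjoin_le (S := AlgHom.equalizer (aeval u) (aeval w))
    (Set.range_subset_iff.2 h) hp

theorem exists_eval_eq_zero_and_eval_eq_one {A : Finset (σ → K)} {w : σ → K} (hw : w ∉ A) :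
    ∃ p : MvPolynomial σ K, eval w p = 0 ∧ ∀ a ∈ A, eval a p = 1 := by
  have hne : ∀ a ∈ A, ∃ i, a i ≠ w i := fun a ha =>
    Function.ne_iff.1 (by rintro rfl; exact hw ha)
  choose i hi using hne
  set q : MvPolynomial σ K := ∏ a ∈ A.attach, (X (i a a.2) - C (a.1 (i a a.2)))
  have hqw : eval w q ≠ 0 := by
    simp only [q, map_prod, map_sub, eval_X, eval_C]
    exact Finset.prod_ne_zero_iff.2 fun a _ => sub_ne_zero.2 (hi a a.2).symm
  refine ⟨1 - C (eval w q)⁻¹ * q, by simp [hqw], fun a ha => ?_⟩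
  have hqa : eval a q = 0 := by
    simp only [q, map_prod, map_sub, eval_X, eval_C]
    exact Finset.prod_eq_zero (Finset.mem_attach _ ⟨a, ha⟩) (sub_self _)
  simp [hqa]

section Linear

variable [Fintype σ]

def linearSubst (g : Matrix σ σ K) : MvPolynomial σ K →ₐ[K] MvPolynomial σ K :=
  bind₁ fun i => ∑ j, C (g i j) * X j

@[simp]
theorem eval_linearSubst (g : Matrix σ σ K) (v : σ → K) (p : MvPolynomial σ K) :
    eval v (linearSubst g p) = eval (g *ᵥ v) p := by
  simp only [linearSubst, eval, eval₂Hom_bind₁]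
  congr
  funext i
  simp [mulVec, dotProduct]

variable [DecidableEq σ]

@[simp]
theorem linearSubst_one (p : MvPolynomial σ K) :
    linearSubst (1 : Matrix σ σ K) p = p := by
  rw [show linearSubst (1 : Matrix σ σ K) = AlgHom.id K _ from
    algHom_ext fun i => by simp [linearSubst, one_apply]]
  rfl

def IsInvariant (W : Subgroup (GL σ K)) (p : MvPolynomial σ K) : Prop :=
  ∀ g ∈ W, ∀ v : σ → K, eval ((g : Matrix σ σ K) *ᵥ v) p = eval v p

variable (W : Subgroup (GL σ K)) [Fintype W]

theorem prod_mulVec_mulVec_of_mem {M : Type*} [CommMonoid M] (F : (σ → K) → M)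
    {g₀ : GL σ K} (hg₀ : g₀ ∈ W) (v : σ → K) :
    ∏ g : W, F (((g : GL σ K) : Matrix σ σ K) *ᵥ ((g₀ : Matrix σ σ K) *ᵥ v)) =
      ∏ g : W, F (((g : GL σ K) : Matrix σ σ K) *ᵥ v) := by
  simp only [mulVec_mulVec]
  exact Fintype.prod_equiv (Equiv.mulRight ⟨g₀, hg₀⟩) _ _ fun g => by simp

theorem isInvariant_prod_linearSubst (p : MvPolynomial σ K) :
    IsInvariant W (∏ g : W, linearSubst ((g : GL σ K) : Matrix σ σ K) p) := by
  intro g₀ hg₀ v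
  simpa only [map_prod, eval_linearSubst] using
    prod_mulVec_mulVec_of_mem W (fun y => eval y p) hg₀ v

theorem exists_isInvariant_eval_ne {u w : σ → K}
    (h : ∀ g ∈ W, u ≠ (g : Matrix σ σ K) *ᵥ w) :
    ∃ P, IsInvariant W P ∧ eval u P ≠ eval w P := by
  classical
  obtain ⟨p, hpw, hpA⟩ := exists_eval_eq_zero_and_eval_eq_one
    (A := Finset.univ.image fun g : W => ((g : GL σ K) : Matrix σ σ K) *ᵥ u) (w := w) (by
      simp only [Finset.mem_image, Finset.mem_univ, true_and, not_exists]
      intro g hg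
      refine h (g⁻¹ : W) (g⁻¹ : W).2 ?_
      simp [← hg, mulVec_mulVec])
  refine ⟨_, isInvariant_prod_linearSubst W p, ?_⟩
  simp only [map_prod, eval_linearSubst]
  rw [Finset.prod_eq_one fun g _ => hpA _ (Finset.mem_image_of_mem _ (Finset.mem_univ g)),
    Finset.prod_eq_zero (Finset.mem_univ 1) (by simpa using hpw)]
  exact one_ne_zero

theorem exists_mem_eq_mulVec_of_forall_isInvariant {u w : σ → K}
    (h : ∀ P, IsInvariant W P → eval u P = eval w P) :
    ∃ g ∈ W, u = (g : Matrix σ σ K) *ᵥ w := by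
  by_contra! hne
  obtain ⟨P, hP, hne⟩ := exists_isInvariant_eval_ne W hne
  exact hne (h P hP)

theorem isIntegral_of_forall_isInvariant_mem (R : Subalgebra K (MvPolynomial σ K))
    (hR : ∀ P, IsInvariant W P → P ∈ R) : Algebra.IsIntegral R (MvPolynomial σ K) := by
  refine ⟨fun p => ?_⟩
  set Φ : Polynomial (MvPolynomial σ K) :=
    ∏ g : W, (Polynomial.X - Polynomial.C (linearSubst ((g : GL σ K) : Matrix σ σ K) p))
  have hΦ_map : ∀ v, Φ.map (eval v) =
      ∏ g : W, (Polynomial.X - Polynomial.C (eval (((g : GL σ K) : Matrix σ σ K) *ᵥ v) p)) := by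
    intro v
    simp [Φ, Polynomial.map_prod]
  have hΦ_coeff : ∀ k, Φ.coeff k ∈ R := fun k => hR _ fun g₀ hg₀ v => by
    have := congrArg (Polynomial.coeff · k) <|
      prod_mulVec_mulVec_of_mem W (fun y => Polynomial.X - Polynomial.C (eval y p)) hg₀ v
    simpa only [← hΦ_map, Polynomial.coeff_map] using this
  obtain ⟨q, hq_map, -, hq_monic⟩ := Polynomial.lifts_and_natDegree_eq_and_monic
    ((Polynomial.lifts_iff_coeff_lifts (f := algebraMap R _) Φ).2 fun k => ⟨⟨_, hΦ_coeff k⟩, rfl⟩)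
    (Polynomial.monic_prod_of_monic _ _ fun g _ => Polynomial.monic_X_sub_C _)
  refine ⟨q, hq_monic, ?_⟩
  rw [Polynomial.eval₂_eq_eval_map, hq_map, Polynomial.eval_prod]
  exact Finset.prod_eq_zero (Finset.mem_univ 1) (by simp)

end Linear

theorem exists_eval_eq_of_isIntegral [IsAlgClosed K] [Finite σ]
    (R : Subalgebra K (MvPolynomial σ K)) [Algebra.IsIntegral R (MvPolynomial σ K)]
    (φ : R →ₐ[K] K) : ∃ v : σ → K, ∀ r : R, eval v r = φ r := by
  have hφ : Function.Surjective φ := fun c => ⟨algebraMap K R c, φ.commutes c⟩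
  have := RingHom.ker_isMaximal_of_surjective (φ : R →+* K) hφ
  obtain ⟨Q, hQ, hQφ⟩ := Ideal.exists_ideal_over_maximal_of_isIntegral (S := MvPolynomial σ K)
    (RingHom.ker (φ : R →+* K)) (by
      rw [(RingHom.injective_iff_ker_eq_bot _).1 Subtype.val_injective]
      exact bot_le)
  obtain ⟨v, rfl⟩ := (isMaximal_iff_eq_vanishingIdeal_singleton (K := K)).1 hQ
  refine ⟨v, fun r => ?_⟩
  have : r - algebraMap K R (φ r) ∈ RingHom.ker (φ : R →+* K) := by simp
  rw [← hQφ, Ideal.mem_comap, mem_vanishingIdeal_singleton_iff] at this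
  simpa [sub_eq_zero] using this

theorem _root_.AlgebraicIndependent.exists_eval_eq [IsAlgClosed K] [Finite σ] {ι : Type*}
    {f : ι → MvPolynomial σ K} (hf : AlgebraicIndependent K f)
    [Algebra.IsIntegral (Algebra.adjoin K (Set.range f)) (MvPolynomial σ K)] (x : ι → K) :
    ∃ v : σ → K, ∀ i, eval v (f i) = x i := by
  obtain ⟨v, hv⟩ := exists_eval_eq_of_isIntegral _ ((aeval x).comp hf.repr)
  refine ⟨v, fun i => ?_⟩
  have hfi : hf.aevalEquiv (X i) = ⟨f i, Algebra.subset_adjoin ⟨i, rfl⟩⟩ := by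
    ext; simp
  simpa [AlgebraicIndependent.repr, ← hfi] using hv ⟨f i, Algebra.subset_adjoin ⟨i, rfl⟩⟩

end MvPolynomial

theorem stmt_10 {n : ℕ} (W : Subgroup (GL (Fin n) ℂ)) (hW : Finite W)
    (f : Fin n → MvPolynomial (Fin n) ℂ) (d : Fin n → ℕ)
    (hhom : ∀ i, (f i).IsHomogeneous (d i))
    (halg : AlgebraicIndependent ℂ f)
    (hinv : ∀ i, ∀ g ∈ W, ∀ v : Fin n → ℂ,
      MvPolynomial.eval ((g : Matrix (Fin n) (Fin n) ℂ).mulVec v) (f i)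
        = MvPolynomial.eval v (f i))
    (hgen : ∀ p : MvPolynomial (Fin n) ℂ,
      (∀ g ∈ W, ∀ v : Fin n → ℂ,
        MvPolynomial.eval ((g : Matrix (Fin n) (Fin n) ℂ).mulVec v) p
          = MvPolynomial.eval v p) →
      p ∈ Algebra.adjoin ℂ (Set.range f)) :
    -- (i) the map v ↦ (f₁(v),…,fₙ(v)) sends ℂⁿ∖{0} into ℂⁿ∖{0}
    (∀ v : Fin n → ℂ, v ≠ 0 → ∃ i, MvPolynomial.eval v (f i) ≠ 0) ∧
    -- (ii) injectivity on the level of the quotients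
    (∀ u v : Fin n → ℂ, u ≠ 0 → v ≠ 0 →
      ((∃ t : ℂ, t ≠ 0 ∧ ∀ i, MvPolynomial.eval u (f i)
          = t ^ d i * MvPolynomial.eval v (f i))
        ↔ (∃ g ∈ W, ∃ s : ℂ, s ≠ 0 ∧
            u = s • (g : Matrix (Fin n) (Fin n) ℂ).mulVec v))) ∧
    -- (iii) surjectivity onto the weighted projective space
    (∀ x : Fin n → ℂ, x ≠ 0 → ∃ v : Fin n → ℂ, v ≠ 0 ∧ ∃ t : ℂ, t ≠ 0 ∧
      ∀ i, x i = t ^ d i * MvPolynomial.eval v (f i)) := by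
  have := Fintype.ofFinite W
  have hf_zero : ∀ i, eval 0 (f i) = 0 := fun i =>
    (hhom i).eval_zero_of_ne_zero (halg.ne_zero_of_isHomogeneous (hhom i))
  have h_orbit : ∀ u w : Fin n → ℂ, (∀ i, eval u (f i) = eval w (f i)) →
      ∃ g ∈ W, u = (g : Matrix (Fin n) (Fin n) ℂ) *ᵥ w := fun u w h =>
    exists_mem_eq_mulVec_of_forall_isInvariant W fun P hP => eval_eq_of_mem_adjoin (hgen P hP) h
  refine ⟨fun v hv => ?_, fun u v _ _ => ⟨?_, ?_⟩, fun x hx => ?_⟩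
  · by_contra! h
    obtain ⟨g, -, rfl⟩ := h_orbit v 0 fun i => by rw [h i, hf_zero i]
    exact hv (mulVec_zero _)
  · rintro ⟨t, ht, hu⟩
    obtain ⟨g, hg, rfl⟩ := h_orbit u (t • v) fun i => by rw [hu i, (hhom i).eval_smul]
    exact ⟨g, hg, t, ht, mulVec_smul _ _ _⟩
  · rintro ⟨g, hg, s, hs, rfl⟩
    exact ⟨s, hs, fun i => by rw [(hhom i).eval_smul, hinv i g hg]⟩
  · have := isIntegral_of_forall_isInvariant_mem W _ hgen
    obtain ⟨v, hv⟩ := halg.exists_eval_eq x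
    refine ⟨v, ?_, 1, one_ne_zero, fun i => by rw [one_pow, one_mul, hv]⟩
    rintro rfl
    exact hx (funext fun i => by rw [← hv, hf_zero, Pi.zero_apply])
end
end
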